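/- arXiv:2510.04762 — 2 statements merged into one kernel-verified Lean document; each statement's English description precedes it below -/
import Mathlib

section
/- Let D ≥ 2 and let h : (-1,1) → (-1,1) be continuously differentiable with h'(t) > 0 for all t. Extend Φ_h to the open set {x ∈ ℝ^D : |x_D| < 1} by the same coordinate formulas, and for x ∈ S^{D-1} with |x_D| < 1 let J(x) be the D×D Jacobian matrix of Φ_h at x. Then for every real D×(D-1) matrix E with EᵀE = I_{D-1} and Eᵀx = 0 (i.e. whose columns form an orthonormal basis of the tangent space of S^{D-1} at x), one has √(det(Eᵀ J(x)ᵀ J(x) E)) = h'(x_D) · ((1 − h(x_D)²)/(1 − x_D²))^{(D-3)/2}. -/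
set_option linter.unusedSectionVars false
set_option maxHeartbeats 1000000

open Real Matrix

/-- The sphere map `Φ_h` (here viewed on the whole ambient space, by the same
coordinate formulas): `Φ_h(x)_i = x_i · √((1 − h(x_D)²)/(1 − x_D²))` for `i < D` and
`Φ_h(x)_D = h(x_D)`. -/
noncomputable def sphereMap (D : ℕ) (h : ℝ → ℝ) (x : EuclideanSpace ℝ (Fin D)) :
    EuclideanSpace ℝ (Fin D) :=
  WithLp.toLp 2 fun i : Fin D =>
    if (i : ℕ) = D - 1 then h (x ⟨D - 1, Nat.sub_lt i.pos Nat.one_pos⟩)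
    else
      x i * Real.sqrt ((1 - h (x ⟨D - 1, Nat.sub_lt i.pos Nat.one_pos⟩) ^ 2) /
        (1 - x ⟨D - 1, Nat.sub_lt i.pos Nat.one_pos⟩ ^ 2))

/-- The `D×D` Jacobian matrix of a map `Ψ : ℝ^D → ℝ^D` at a point `x`. -/
noncomputable def jacobianMatrix (D : ℕ)
    (Ψ : EuclideanSpace ℝ (Fin D) → EuclideanSpace ℝ (Fin D))
    (x : EuclideanSpace ℝ (Fin D)) : Matrix (Fin D) (Fin D) ℝ :=
  fun i j => fderiv ℝ Ψ x (EuclideanSpace.single j 1) i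

noncomputable def sFun (h : ℝ → ℝ) (t : ℝ) : ℝ := Real.sqrt ((1 - h t ^ 2) / (1 - t ^ 2))
noncomputable def qDeriv (h h' : ℝ → ℝ) (t : ℝ) : ℝ :=
  (-(2 * h t * h' t) * (1 - t ^ 2) - (1 - h t ^ 2) * (-(2 * t))) / ((1 - t ^ 2) ^ 2)
noncomputable def sDeriv (h h' : ℝ → ℝ) (t : ℝ) : ℝ := 1 / (2 * sFun h t) * qDeriv h h' t
noncomputable def psiDeriv (h h' : ℝ → ℝ) (t : ℝ) : ℝ :=
  h' t - (sDeriv h h' t * t + sFun h t * 1)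

lemma qPos {h : ℝ → ℝ} {t : ℝ} (ht : t ∈ Set.Ioo (-1:ℝ) 1) (hmem : h t ∈ Set.Ioo (-1:ℝ) 1) :
    0 < (1 - h t ^ 2) / (1 - t ^ 2) := by
  obtain ⟨h1, h2⟩ := ht; obtain ⟨h3, h4⟩ := hmem
  apply div_pos <;> nlinarith

lemma hasDerivAt_q {h h' : ℝ → ℝ} {t : ℝ} (ht : t ∈ Set.Ioo (-1:ℝ) 1)
    (hd : HasDerivAt h (h' t) t) :
    HasDerivAt (fun u => (1 - h u ^ 2) / (1 - u ^ 2)) (qDeriv h h' t) t := by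
  have hden : (1 : ℝ) - t ^ 2 ≠ 0 := by obtain ⟨h1, h2⟩ := ht; nlinarith
  have hn : HasDerivAt (fun u => 1 - h u ^ 2) (-(2 * h t * h' t)) t := by
    have := ((hd.pow 2).const_sub 1)
    exact this.congr_deriv (by simp only [Nat.cast_ofNat, Nat.add_one_sub_one, pow_one])
  have hdd : HasDerivAt (fun u : ℝ => 1 - u ^ 2) (-(2 * t)) t := by
    have := ((hasDerivAt_id t).pow 2).const_sub 1
    exact this.congr_deriv (by simp only [id, Nat.cast_ofNat, Nat.add_one_sub_one, pow_one, mul_one])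
  exact (hn.div hdd hden)

lemma hasDerivAt_sFun {h h' : ℝ → ℝ} {t : ℝ} (ht : t ∈ Set.Ioo (-1:ℝ) 1)
    (hmem : h t ∈ Set.Ioo (-1:ℝ) 1) (hd : HasDerivAt h (h' t) t) :
    HasDerivAt (sFun h) (sDeriv h h' t) t := by
  have hq := qPos ht hmem
  exact (Real.hasDerivAt_sqrt hq.ne').comp t (hasDerivAt_q ht hd)

lemma hasDerivAt_psi {h h' : ℝ → ℝ} {t : ℝ} (ht : t ∈ Set.Ioo (-1:ℝ) 1)
    (hmem : h t ∈ Set.Ioo (-1:ℝ) 1) (hd : HasDerivAt h (h' t) t) :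
    HasDerivAt (fun u => h u - sFun h u * u) (psiDeriv h h' t) t :=
  hd.sub ((hasDerivAt_sFun ht hmem hd).mul (hasDerivAt_id t))

lemma sphereMap_eq (D : ℕ) (h : ℝ → ℝ) (ℓ : Fin D) (hℓ : (ℓ : ℕ) = D - 1) :
    sphereMap D h = fun y : EuclideanSpace ℝ (Fin D) =>
      sFun h (y ℓ) • y + (h (y ℓ) - sFun h (y ℓ) * y ℓ) • EuclideanSpace.single ℓ (1:ℝ) := by
  funext y; ext i
  have hi' : (⟨D - 1, Nat.sub_lt i.pos Nat.one_pos⟩ : Fin D) = ℓ := Fin.ext (by simp [hℓ])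
  by_cases hi : (i : ℕ) = D - 1
  · have : i = ℓ := Fin.ext (by simp [hi, hℓ])
    subst this
    simp [sphereMap, hi, hi', PiLp.add_apply, PiLp.smul_apply, EuclideanSpace.single_apply,
      smul_eq_mul]
  · have : i ≠ ℓ := fun hc => hi (by rw [hc, hℓ])
    simp [sphereMap, hi, hi', PiLp.add_apply, PiLp.smul_apply, EuclideanSpace.single_apply,
      smul_eq_mul, this, sFun]
    rw [hi']
    ring

lemma jacobianMatrix_sphereMap (D : ℕ) (h h' : ℝ → ℝ) (x : EuclideanSpace ℝ (Fin D))
    (ℓ : Fin D) (hℓ : (ℓ : ℕ) = D - 1)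
    (ht : x ℓ ∈ Set.Ioo (-1:ℝ) 1) (hmem : h (x ℓ) ∈ Set.Ioo (-1:ℝ) 1)
    (hd : HasDerivAt h (h' (x ℓ)) (x ℓ)) :
    jacobianMatrix D (sphereMap D h) x =
      sFun h (x ℓ) • (1 : Matrix (Fin D) (Fin D) ℝ) +
        Matrix.vecMulVec
          (fun i => sDeriv h h' (x ℓ) * x i + psiDeriv h h' (x ℓ) * (Pi.single ℓ (1:ℝ) : Fin D → ℝ) i)
          ((Pi.single ℓ 1 : Fin D → ℝ)) := by
  set t := x ℓ with htdef
  have hproj : HasFDerivAt (fun y : EuclideanSpace ℝ (Fin D) => y ℓ)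
      (EuclideanSpace.proj ℓ : EuclideanSpace ℝ (Fin D) →L[ℝ] ℝ) x := by
    exact ContinuousLinearMap.hasFDerivAt (EuclideanSpace.proj (𝕜 := ℝ) ℓ)
  have hS : HasFDerivAt (fun y : EuclideanSpace ℝ (Fin D) => sFun h (y ℓ))
      (sDeriv h h' t • (EuclideanSpace.proj ℓ : EuclideanSpace ℝ (Fin D) →L[ℝ] ℝ)) x :=
    (hasDerivAt_sFun ht hmem hd).comp_hasFDerivAt (f := fun y : EuclideanSpace ℝ (Fin D) => y ℓ) x hproj
  have hpsi : HasFDerivAt (fun y : EuclideanSpace ℝ (Fin D) => h (y ℓ) - sFun h (y ℓ) * y ℓ)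
      (psiDeriv h h' t • (EuclideanSpace.proj ℓ : EuclideanSpace ℝ (Fin D) →L[ℝ] ℝ)) x :=
    (hasDerivAt_psi ht hmem hd).comp_hasFDerivAt (f := fun y : EuclideanSpace ℝ (Fin D) => y ℓ) x hproj
  have h1 : HasFDerivAt (fun y : EuclideanSpace ℝ (Fin D) => sFun h (y ℓ) • y)
      (sFun h t • ContinuousLinearMap.id ℝ (EuclideanSpace ℝ (Fin D)) +
        (sDeriv h h' t • (EuclideanSpace.proj ℓ : EuclideanSpace ℝ (Fin D) →L[ℝ] ℝ)).smulRight x)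
      x := by
    exact hS.smul (hasFDerivAt_id x)
  have h2 := hpsi.smul_const (EuclideanSpace.single ℓ (1:ℝ))
  have hL := h1.add h2
  rw [sphereMap_eq D h ℓ hℓ]
  have hfd := HasFDerivAt.fderiv (f := fun y : EuclideanSpace ℝ (Fin D) => sFun h (y ℓ) • y + (h (y ℓ) - sFun h (y ℓ) * y ℓ) • EuclideanSpace.single ℓ (1:ℝ)) hL
  funext i j
  simp only [jacobianMatrix]
  rw [hfd]
  simp only [ContinuousLinearMap.add_apply, ContinuousLinearMap.smul_apply,
    ContinuousLinearMap.smulRight_apply, ContinuousLinearMap.id_apply,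
    ContinuousLinearMap.coe_smul', Pi.smul_apply, PiLp.proj_apply,
    PiLp.add_apply, PiLp.smul_apply, smul_eq_mul, Matrix.add_apply, Matrix.smul_apply,
    Matrix.one_apply, Matrix.vecMulVec_apply, EuclideanSpace.single_apply, Pi.single_apply]
  by_cases hjl : ℓ = j <;> by_cases hij : i = j <;> by_cases hil : i = ℓ <;>
    simp [hij, hjl, hil, eq_comm] <;> ring

section helpers
variable {m n p : Type*} [Fintype m] [Fintype n] [Fintype p]

lemma vecMulVec_mul' (w : m → ℝ) (v : n → ℝ) (M : Matrix n p ℝ) :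
    vecMulVec w v * M = vecMulVec w (v ᵥ* M) := by
  ext i j
  simp [vecMulVec_apply, Matrix.mul_apply, Matrix.vecMul, dotProduct, Finset.mul_sum, mul_assoc]

lemma mul_vecMulVec' (M : Matrix p m ℝ) (w : m → ℝ) (v : n → ℝ) :
    M * vecMulVec w v = vecMulVec (M *ᵥ w) v := by
  ext i j
  simp [vecMulVec_apply, Matrix.mul_apply, Matrix.mulVec, dotProduct, Finset.sum_mul, mul_assoc]

lemma vecMulVec_mul_vecMulVec' (w : m → ℝ) (v w' : n → ℝ) (v' : p → ℝ) :
    vecMulVec w v * vecMulVec w' v' = (v ⬝ᵥ w') • vecMulVec w v' := by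
  ext i j
  simp only [vecMulVec_apply, Matrix.mul_apply, dotProduct, Finset.sum_mul, Finset.mul_sum,
    smul_eq_mul, Matrix.smul_apply]
  exact Finset.sum_congr rfl fun k _ => by ring

lemma vecMulVec_transpose' (w : m → ℝ) (v : n → ℝ) :
    (vecMulVec w v)ᵀ = vecMulVec v w := by
  ext i j; simp [vecMulVec_apply, mul_comm]

lemma smul_vecMulVec (c : ℝ) (w : m → ℝ) (v : n → ℝ) :
    vecMulVec (c • w) v = c • vecMulVec w v := by
  ext i j; simp [vecMulVec_apply, mul_assoc]

lemma vecMulVec_smul' (c : ℝ) (w : m → ℝ) (v : n → ℝ) :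
    vecMulVec w (c • v) = c • vecMulVec w v := by
  ext i j; simp [vecMulVec_apply]; ring

end helpers

lemma complete_orthonormal (D : ℕ) (hD : 1 ≤ D) (E : Matrix (Fin D) (Fin (D - 1)) ℝ)
    (v : Fin D → ℝ) (hE : Eᵀ * E = 1) (hEv : Eᵀ.mulVec v = 0) (hv : v ⬝ᵥ v = 1) :
    E * Eᵀ = 1 - vecMulVec v v := by
  set F : Matrix (Fin D) (Fin (D - 1) ⊕ Unit) ℝ :=
    Matrix.of (fun i j => Sum.elim (fun k => E i k) (fun _ => v i) j) with hF
  have e : (Fin (D - 1) ⊕ Unit) ≃ Fin D := Fintype.equivOfCardEq (by simp; omega)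
  have hFtF : Fᵀ * F = 1 := by
    ext j j'
    cases j with
    | inl k =>
      cases j' with
      | inl l =>
        have h1 := congrFun (congrFun hE k) l
        simpa [Matrix.mul_apply, Matrix.one_apply, hF] using h1
      | inr u =>
        have h1 := congrFun hEv k
        simpa [Matrix.mul_apply, Matrix.one_apply, Matrix.mulVec, dotProduct, hF] using h1
    | inr u =>
      cases j' with
      | inl l =>
        have h1 := congrFun hEv l
        simpa [Matrix.mul_apply, Matrix.one_apply, Matrix.mulVec, dotProduct, hF,
          mul_comm] using h1
      | inr u' =>
        simpa [Matrix.mul_apply, Matrix.one_apply, dotProduct, hF] using hv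
  have hFFt : F * Fᵀ = 1 := (Matrix.mul_eq_one_comm_of_equiv e.symm).mpr hFtF
  have hsum : ∀ i i', (F * Fᵀ) i i' = (E * Eᵀ) i i' + v i * v i' := by
    intro i i'
    simp [Matrix.mul_apply, hF, Fintype.sum_sum_type]
  ext i i'
  have h2 := congrFun (congrFun hFFt i) i'
  rw [hsum i i'] at h2
  simp only [Matrix.sub_apply, Matrix.vecMulVec_apply]
  linarith [h2]

/-- for `h : (-1,1) → (-1,1)` continuously differentiable with `h' > 0`,
the Jacobian `J(x)` of the ambient extension of `Φ_h` at a sphere point `x` with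
`|x_D| < 1` satisfies, for any matrix `E` whose columns form an orthonormal basis of the
tangent space at `x`:
`√(det(Eᵀ J(x)ᵀ J(x) E)) = h'(x_D) · ((1 − h(x_D)²)/(1 − x_D²))^((D-3)/2)`. -/
theorem sphereMap_density_update (D : ℕ) (hD : 2 ≤ D) (h h' : ℝ → ℝ)
    (hmaps : ∀ t ∈ Set.Ioo (-1 : ℝ) 1, h t ∈ Set.Ioo (-1 : ℝ) 1)
    (hderiv : ∀ t ∈ Set.Ioo (-1 : ℝ) 1, HasDerivAt h (h' t) t)
    (hcont : ContinuousOn h' (Set.Ioo (-1 : ℝ) 1))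
    (hpos : ∀ t ∈ Set.Ioo (-1 : ℝ) 1, 0 < h' t)
    (x : EuclideanSpace ℝ (Fin D)) (hx : ‖x‖ = 1)
    (hlast : |x ⟨D - 1, by omega⟩| < 1)
    (E : Matrix (Fin D) (Fin (D - 1)) ℝ)
    (hE : Eᵀ * E = 1)
    (hEx : Eᵀ.mulVec (fun i => x i) = 0) :
    Real.sqrt
        ((Eᵀ * (jacobianMatrix D (sphereMap D h) x)ᵀ *
            jacobianMatrix D (sphereMap D h) x * E).det) =
      h' (x ⟨D - 1, by omega⟩) *
        ((1 - h (x ⟨D - 1, by omega⟩) ^ 2) / (1 - x ⟨D - 1, by omega⟩ ^ 2)) ^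
          (((D : ℝ) - 3) / 2) := by
  have hD1 : D - 1 < D := by omega
  let ℓ : Fin D := ⟨D - 1, hD1⟩
  have htIoo : x ℓ ∈ Set.Ioo (-1:ℝ) 1 := by
    constructor
    · have := (abs_lt.mp hlast).1; exact this
    · exact (abs_lt.mp hlast).2
  set t := x ℓ with htdef
  have hmem := hmaps t htIoo
  have hd := hderiv t htIoo
  have hp := hpos t htIoo
  set S := sFun h t with hSdef
  set S' := sDeriv h h' t with hS'def
  set P := psiDeriv h h' t with hPdef
  set q := (1 - h t ^ 2) / (1 - t ^ 2) with hqdef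
  have hq : 0 < q := qPos htIoo hmem
  have h1t : (0:ℝ) < 1 - t ^ 2 := by
    obtain ⟨a1, a2⟩ := htIoo; nlinarith
  have hS2 : S ^ 2 = q := Real.sq_sqrt hq.le
  have hSpos : 0 < S := Real.sqrt_pos.mpr hq
  -- vectors
  set u : Fin D → ℝ := Pi.single ℓ 1 with hu
  set xv : Fin D → ℝ := fun i => x i with hxv
  set w : Fin D → ℝ := S' • xv + P • u with hw
  set a : Fin (D-1) → ℝ := fun k => E ℓ k with ha
  -- Jacobian
  have hJ : jacobianMatrix D (sphereMap D h) x
      = S • (1 : Matrix (Fin D) (Fin D) ℝ) + vecMulVec w u := by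
    rw [jacobianMatrix_sphereMap D h h' x ℓ rfl htIoo hmem hd]
    congr 1
  -- dot products
  have hxx : xv ⬝ᵥ xv = 1 := by
    have hx2 := hx
    rw [EuclideanSpace.norm_eq] at hx2
    have hsum : ∑ i, x i ^ 2 = 1 := by
      have h1 : ∑ i, ‖x i‖ ^ 2 = 1 := Real.sqrt_eq_one.mp hx2
      calc ∑ i, x i ^ 2 = ∑ i, ‖x i‖ ^ 2 :=
            Finset.sum_congr rfl fun i _ => by rw [Real.norm_eq_abs, sq_abs]
        _ = 1 := h1
    simpa [dotProduct, hxv, ← pow_two] using hsum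
  have hxu : xv ⬝ᵥ u = t := by simp [hu, hxv, dotProduct_single, htdef]
  have hux : u ⬝ᵥ xv = t := by simp [hu, hxv, single_dotProduct, htdef]
  have huu : u ⬝ᵥ u = 1 := by simp [hu, single_dotProduct, Pi.single_apply]
  have hww : w ⬝ᵥ w = S' * S' + 2 * (S' * P * t) + P * P := by
    simp only [hw, add_dotProduct, dotProduct_add, smul_dotProduct, dotProduct_smul,
      smul_eq_mul, hxx, hxu, hux, huu]
    ring
  -- vecMul facts
  have huE : u ᵥ* E = a := by
    funext k
    simp [Matrix.vecMul, hu, ha, single_dotProduct]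
  have hxE : xv ᵥ* E = 0 := by
    rw [← Matrix.mulVec_transpose]
    exact hEx
  have hwE : w ᵥ* E = P • a := by
    rw [hw, Matrix.add_vecMul]
    rw [Matrix.smul_vecMul, Matrix.smul_vecMul, hxE, huE]
    simp
  have hEu : Eᵀ *ᵥ u = a := by rw [Matrix.mulVec_transpose]; exact huE
  have hEw : Eᵀ *ᵥ w = P • a := by rw [Matrix.mulVec_transpose]; exact hwE
  -- matrix computation
  set γ : ℝ := S * P + (S * P + (S' * S' + 2 * (S' * P * t) + P * P)) with hγdef
  have hA : (S • (1 : Matrix (Fin D) (Fin D) ℝ) + vecMulVec w u) * E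
      = S • E + vecMulVec w a := by
    rw [Matrix.add_mul, Matrix.smul_mul, Matrix.one_mul, vecMulVec_mul', huE]
  have hAt : Eᵀ * (S • (1 : Matrix (Fin D) (Fin D) ℝ) + vecMulVec w u)ᵀ
      = S • Eᵀ + vecMulVec a w := by
    rw [← Matrix.transpose_mul, hA, Matrix.transpose_add, Matrix.transpose_smul,
      vecMulVec_transpose']
  have hM : Eᵀ * (jacobianMatrix D (sphereMap D h) x)ᵀ * jacobianMatrix D (sphereMap D h) x * E
      = (S * S) • (1 : Matrix (Fin (D-1)) (Fin (D-1)) ℝ) + γ • vecMulVec a a := by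
    have p1 : (S • Eᵀ) * (S • E) = (S * S) • (1 : Matrix (Fin (D-1)) (Fin (D-1)) ℝ) := by
      rw [Matrix.smul_mul, Matrix.mul_smul, hE, smul_smul]
    have p2 : (S • Eᵀ) * vecMulVec w a = (S * P) • vecMulVec a a := by
      rw [Matrix.smul_mul, mul_vecMulVec', hEw, _root_.smul_vecMulVec, smul_smul]
    have p3 : vecMulVec a w * (S • E) = (S * P) • vecMulVec a a := by
      rw [Matrix.mul_smul, vecMulVec_mul', hwE, _root_.vecMulVec_smul', smul_smul]
    have p4 : vecMulVec a w * vecMulVec w a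
        = (S' * S' + 2 * (S' * P * t) + P * P) • vecMulVec a a := by
      rw [vecMulVec_mul_vecMulVec', hww]
    rw [hJ, Matrix.mul_assoc (Eᵀ * _) _ E, hA, hAt]
    rw [Matrix.add_mul, Matrix.mul_add, Matrix.mul_add, p1, p2, p3, p4, hγdef]
    module
  -- a ⬝ᵥ a
  have haa : a ⬝ᵥ a = 1 - t * t := by
    have hC := complete_orthonormal D (by omega) E xv hE hEx hxx
    have h2 := congrFun (congrFun hC ℓ) ℓ
    simp only [Matrix.sub_apply, Matrix.one_apply_eq, Matrix.vecMulVec_apply, hxv,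
      Matrix.mul_apply, Matrix.transpose_apply] at h2
    simpa [ha, dotProduct, ← htdef] using h2
  -- determinant
  have hq2 : S * S ≠ 0 := by positivity
  have hdet : ((S * S) • (1 : Matrix (Fin (D-1)) (Fin (D-1)) ℝ) + γ • vecMulVec a a).det
      = (S * S) ^ (D - 1) * (1 + γ / (S * S) * (a ⬝ᵥ a)) := by
    have hsplit : (S * S) • (1 : Matrix (Fin (D-1)) (Fin (D-1)) ℝ) + γ • vecMulVec a a
        = (S * S) • ((1 : Matrix (Fin (D-1)) (Fin (D-1)) ℝ)
            + vecMulVec ((γ / (S * S)) • a) a) := by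
      rw [smul_add, _root_.smul_vecMulVec, smul_smul, mul_div_cancel₀ _ hq2]
    rw [hsplit, Matrix.det_smul, Fintype.card_fin]
    congr 1
    rw [vecMulVec_eq Unit, Matrix.det_one_add_replicateCol_mul_replicateRow]
    rw [dotProduct_smul]
    simp [mul_comm]
  -- scalar identities
  have hC1 : S ^ 2 * (1 - t ^ 2) = 1 - h t ^ 2 := by
    rw [hS2, hqdef]; field_simp
  have hC2 : S * S' * (1 - t ^ 2) = t * S ^ 2 - h t * h' t := by
    rw [hS'def, sDeriv, qDeriv, ← hSdef]
    have hC1' : 1 - h t ^ 2 = S ^ 2 * (1 - t ^ 2) := hC1.symm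
    have hSne : S ≠ 0 := hSpos.ne'
    have h1ne : (1:ℝ) - t ^ 2 ≠ 0 := h1t.ne'
    rw [hC1']
    field_simp
    ring
  have hP' : P = h' t - (S' * t + S * 1) := by
    rw [hPdef, psiDeriv, ← hS'def, ← hSdef]
  have hkey : S ^ 2 * (S ^ 2 + γ * (1 - t ^ 2)) = h' t ^ 2 := by
    rw [hγdef, hP']
    linear_combination (h' t ^ 2) * hC1 -
      (t * S ^ 2 + h t * h' t - S * S' * (1 - t ^ 2)) * hC2
  -- final computation
  show Real.sqrt _ = h' t * q ^ (((D : ℝ) - 3) / 2)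
  rw [hM, hdet, haa]
  have hfr : 1 + γ / (S * S) * (1 - t * t) = h' t ^ 2 / (S * S) ^ 2 := by
    field_simp
    nlinarith [hkey]
  rw [hfr]
  have hSS : S * S = q := by rw [← hS2]; ring
  rw [hSS]
  have hexp : (q : ℝ) ^ (D - 1 : ℕ) * (h' t ^ 2 / q ^ 2) = h' t ^ 2 * (q ^ ((D:ℝ) - 3)) := by
    rw [← Real.rpow_natCast q (D - 1), ← Real.rpow_natCast q 2]
    rw [div_eq_mul_inv, ← Real.rpow_neg hq.le]
    rw [mul_comm, mul_assoc, ← Real.rpow_add hq]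
    congr 2
    have : ((D - 1 : ℕ) : ℝ) = (D : ℝ) - 1 := by
      rw [Nat.cast_sub (by omega)]; norm_num
    rw [this]; norm_num; ring
  rw [hexp]
  rw [Real.sqrt_mul (by positivity), Real.sqrt_sq hp.le]
  congr 1
  rw [Real.sqrt_eq_rpow, ← Real.rpow_mul hq.le]
  congr 1
  ring
end

section
/- Let A ≥ 1 be an integer (corresponding to odd dimension D = 2A + 1), κ > 0 and y ∈ [0,1]. For integers b > a ≥ 1 define M(a, b, x) = ((b-1)! / ((a-1)!·(b-a-1)!)) · ∫_{0}^{1} e^{x t} t^{a-1} (1-t)^{b-a-1} dt (the Kummer confluent hypergeometric function ₁F₁(a; b; x)). Then (∫_{-1}^{2y-1} e^{κt}(1 − t²)^{A-1} dt) / (∫_{-1}^{1} e^{κt}(1 − t²)^{A-1} dt) = Σ_{i=A}^{2A-1} C(2A-1, i) · yⁱ (1 − y)^{2A-1-i} · M(A, i+1, 2κy) / M(A, 2A, 2κ). -/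
open Real

/-- The Kummer confluent hypergeometric function `₁F₁(a; b; x)` for integers `b > a ≥ 1`,
via the Euler integral representation
`M(a, b, x) = ((b-1)!/((a-1)!(b-a-1)!)) ∫₀¹ e^{xt} t^{a-1}(1-t)^{b-a-1} dt`. -/
noncomputable def kummerM (a b : ℕ) (x : ℝ) : ℝ :=
  ((Nat.factorial (b - 1) : ℝ) /
      ((Nat.factorial (a - 1) : ℝ) * (Nat.factorial (b - a - 1) : ℝ))) *
    ∫ t in (0 : ℝ)..1, Real.exp (x * t) * t ^ (a - 1) * (1 - t) ^ (b - a - 1)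

lemma sub1 (A : ℕ) (κ : ℝ) (y : ℝ) :
    (∫ t in (-1 : ℝ)..(2 * y - 1), Real.exp (κ * t) * (1 - t ^ 2) ^ (A - 1)) =
      (2 * Real.exp (-κ) * 4 ^ (A - 1)) *
        ∫ s in (0 : ℝ)..y, Real.exp (2 * κ * s) * s ^ (A - 1) * (1 - s) ^ (A - 1) := by
  have h := intervalIntegral.integral_comp_mul_add
    (a := (0:ℝ)) (b := y) (fun t => Real.exp (κ * t) * (1 - t ^ 2) ^ (A - 1))
    (two_ne_zero) (-1)
  simp only [mul_zero, zero_add, smul_eq_mul] at h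
  rw [show (2 : ℝ) * y + -1 = 2 * y - 1 by ring] at h
  have h2 : (∫ t in (-1 : ℝ)..(2 * y - 1), Real.exp (κ * t) * (1 - t ^ 2) ^ (A - 1)) =
      2 * ∫ x in (0:ℝ)..y, Real.exp (κ * (2 * x + -1)) * (1 - (2 * x + -1) ^ 2) ^ (A - 1) := by
    rw [h]; ring
  rw [h2]
  simp only [← intervalIntegral.integral_const_mul]
  congr 1
  funext s
  rw [show (1 : ℝ) - (2 * s + -1) ^ 2 = 4 * (s * (1 - s)) by ring, mul_pow, mul_pow,
    show κ * (2 * s + -1) = 2 * κ * s + -κ by ring, Real.exp_add]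
  ring

lemma expand1 (A : ℕ) (hA : 1 ≤ A) (κ y : ℝ) (hy0 : 0 ≤ y) :
    (∫ s in (0:ℝ)..y, Real.exp (2*κ*s) * s^(A-1) * (1-s)^(A-1))
     = ∑ j ∈ Finset.range A, (Nat.choose (A-1) j : ℝ) * y^(A+j) * (1-y)^(A-1-j) *
         ∫ u in (0:ℝ)..1, Real.exp (2*κ*y*u) * u^(A-1) * (1-u)^j := by
  rcases eq_or_lt_of_le hy0 with h0 | hy
  · rw [← h0]
    simp only [intervalIntegral.integral_same]
    symm
    apply Finset.sum_eq_zero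
    intro j _
    rw [zero_pow (by omega : A + j ≠ 0)]
    ring
  · have h := intervalIntegral.integral_comp_mul_left (a := (0:ℝ)) (b := 1)
      (fun s => Real.exp (2*κ*s) * s^(A-1) * (1-s)^(A-1)) (ne_of_gt hy)
    simp only [mul_zero, mul_one, smul_eq_mul] at h
    have h2 : (∫ s in (0:ℝ)..y, Real.exp (2*κ*s) * s^(A-1) * (1-s)^(A-1))
        = y * ∫ u in (0:ℝ)..1,
            Real.exp (2*κ*(y*u)) * (y*u)^(A-1) * (1-y*u)^(A-1) := by
      rw [h]; field_simp
    rw [h2]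
    have hpt : (fun u : ℝ => Real.exp (2*κ*(y*u)) * (y*u)^(A-1) * (1-y*u)^(A-1))
        = fun u : ℝ => ∑ j ∈ Finset.range A,
            ((Nat.choose (A-1) j : ℝ) * y^(A-1+j) * (1-y)^(A-1-j)) *
              (Real.exp (2*κ*y*u) * u^(A-1) * (1-u)^j) := by
      funext u
      rw [show (1:ℝ) - y*u = (y*(1-u)) + (1-y) by ring, add_pow,
        show A - 1 + 1 = A from Nat.sub_add_cancel hA, Finset.mul_sum]
      refine Finset.sum_congr rfl fun j _ => ?_
      rw [mul_pow, mul_pow, show A - 1 + j = (A-1) + j from rfl, pow_add]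
      ring_nf
    rw [hpt, intervalIntegral.integral_finset_sum (fun j _ => by
      apply Continuous.intervalIntegrable; fun_prop)]
    simp only [intervalIntegral.integral_const_mul]
    rw [Finset.mul_sum]
    refine Finset.sum_congr rfl fun j _ => ?_
    rw [show A + j = (A - 1 + j) + 1 by omega, pow_succ]
    ring

lemma natkey (A j : ℕ) (hA : 1 ≤ A) (hj : j < A) :
    Nat.choose (A-1) j * (Nat.factorial j * Nat.factorial (2*A-1)) =
      Nat.choose (2*A-1) (A+j) * (Nat.factorial (A+j) * Nat.factorial (A-1)) := by
  have h1 : Nat.choose (A-1) j * Nat.factorial j * Nat.factorial (A-1-j)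
      = Nat.factorial (A-1) := Nat.choose_mul_factorial_mul_factorial (by omega)
  have h2 : Nat.choose (2*A-1) (A+j) * Nat.factorial (A+j) * Nat.factorial (2*A-1-(A+j))
      = Nat.factorial (2*A-1) := Nat.choose_mul_factorial_mul_factorial (by omega)
  rw [show 2*A-1-(A+j) = A-1-j by omega] at h2
  apply Nat.eq_of_mul_eq_mul_right (Nat.factorial_pos (A-1-j))
  calc Nat.choose (A-1) j * (Nat.factorial j * Nat.factorial (2*A-1)) * Nat.factorial (A-1-j)
      = (Nat.choose (A-1) j * Nat.factorial j * Nat.factorial (A-1-j))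
          * Nat.factorial (2*A-1) := by ring
    _ = Nat.factorial (A-1) * Nat.factorial (2*A-1) := by rw [h1]
    _ = (Nat.choose (2*A-1) (A+j) * Nat.factorial (A+j) * Nat.factorial (A-1-j))
          * Nat.factorial (A-1) := by rw [h2]; ring
    _ = _ := by ring

/-- finite-sum representation of `F_κ` for odd dimension `D = 2A+1`:
`(∫_{-1}^{2y-1} e^{κt}(1 − t²)^{A-1} dt) / (∫_{-1}^{1} e^{κt}(1 − t²)^{A-1} dt)
  = Σ_{i=A}^{2A-1} C(2A-1, i) · yⁱ (1 − y)^{2A-1-i} · M(A, i+1, 2κy) / M(A, 2A, 2κ)`. -/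
theorem Fcdf_finite_sum (A : ℕ) (hA : 1 ≤ A) (κ : ℝ) (hκ : 0 < κ)
    (y : ℝ) (hy : y ∈ Set.Icc (0 : ℝ) 1) :
    (∫ t in (-1 : ℝ)..(2 * y - 1), Real.exp (κ * t) * (1 - t ^ 2) ^ (A - 1)) /
        (∫ t in (-1 : ℝ)..1, Real.exp (κ * t) * (1 - t ^ 2) ^ (A - 1)) =
      ∑ i ∈ Finset.Icc A (2 * A - 1),
        (Nat.choose (2 * A - 1) i : ℝ) * y ^ i * (1 - y) ^ (2 * A - 1 - i) *
          (kummerM A (i + 1) (2 * κ * y) / kummerM A (2 * A) (2 * κ)) := by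
  obtain ⟨hy0, hy1⟩ := hy
  have hDpos : 0 < ∫ s in (0:ℝ)..1, Real.exp (2*κ*s) * s^(A-1) * (1-s)^(A-1) := by
    apply intervalIntegral.intervalIntegral_pos_of_pos_on
    · apply Continuous.intervalIntegrable; fun_prop
    · intro x hx
      have h1 : 0 < x := hx.1
      have h2 : 0 < 1 - x := by linarith [hx.2]
      positivity
    · norm_num
  have hDne := ne_of_gt hDpos
  have hden : (∫ t in (-1 : ℝ)..1, Real.exp (κ * t) * (1 - t ^ 2) ^ (A - 1)) =
      (2 * Real.exp (-κ) * 4 ^ (A - 1)) *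
        ∫ s in (0 : ℝ)..1, Real.exp (2 * κ * s) * s ^ (A - 1) * (1 - s) ^ (A - 1) := by
    have := sub1 A κ 1
    rw [show (2:ℝ) * 1 - 1 = 1 by norm_num] at this
    exact this
  rw [sub1 A κ y, hden, mul_div_mul_left _ _ (by positivity : (2:ℝ) * Real.exp (-κ) * 4 ^ (A-1) ≠ 0)]
  rw [expand1 A hA κ y hy0]
  rw [show Finset.Icc A (2*A-1) = Finset.Ico A (2*A) by
    rw [← Finset.Ico_add_one_right_eq_Icc]; congr 1; omega]
  rw [Finset.sum_Ico_eq_sum_range, show 2*A - A = A by omega, Finset.sum_div]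
  refine Finset.sum_congr rfl fun j hj => ?_
  have hjA : j < A := Finset.mem_range.mp hj
  simp only [kummerM]
  rw [show A + j + 1 - 1 = A + j from rfl, show A + j + 1 - A - 1 = j by omega,
    show 2*A - 1 - (A+j) = A - 1 - j by omega, show 2*A - A - 1 = A - 1 by omega]
  set N := ∫ u in (0:ℝ)..1, Real.exp (2*κ*y*u) * u^(A-1) * (1-u)^j with hN
  set D := ∫ s in (0:ℝ)..1, Real.exp (2*κ*s) * s^(A-1) * (1-s)^(A-1) with hD
  have hNN : (∫ t in (0:ℝ)..1, Real.exp (2*κ*y*t) * t^(A-1) * (1-t)^j) = N := rfl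
  have hkey : (Nat.choose (A-1) j : ℝ) * (Nat.factorial j * Nat.factorial (2*A-1)) =
      (Nat.choose (2*A-1) (A+j) : ℝ) * (Nat.factorial (A+j) * Nat.factorial (A-1)) := by
    exact_mod_cast congrArg (Nat.cast (R := ℝ)) (natkey A j hA hjA)
  have hf2 : (Nat.factorial (A-1) : ℝ) ≠ 0 := Nat.cast_ne_zero.mpr (Nat.factorial_ne_zero _)
  have hf3 : (Nat.factorial j : ℝ) ≠ 0 := Nat.cast_ne_zero.mpr (Nat.factorial_ne_zero _)
  have hf4 : (Nat.factorial (2*A-1) : ℝ) ≠ 0 := Nat.cast_ne_zero.mpr (Nat.factorial_ne_zero _)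
  field_simp
  linear_combination (y^(A+j) * (1-y)^(A-1-j) * N) * hkey
end
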